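/- If P_n is a path of order n ≥ 3, then pd_k(P_n) = k + 1 for every k ∈ {1, 2, …, n−1}. -/
import Mathlib


open SimpleGraph Finset

/-- Distance from a vertex to a finite set of vertices:
`min_{w ∈ S} d(u, w)`. -/
noncomputable def setDist {V : Type*} (G : SimpleGraph V) (u : V) (S : Finset V) : ℕ :=
  sInf (G.dist u '' (S : Set V))

/-- The set `𝒟_G(x,y)` of vertices distinguishing `x` and `y`. -/
noncomputable def DG {V : Type*} (G : SimpleGraph V) [Fintype V] (x y : V) : Finset V :=
  Finset.univ.filter fun z => G.dist z x ≠ G.dist z y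

/-- `𝔡(G) = min_{x ≠ y} |𝒟_G(x,y)|`. -/
noncomputable def frakd {V : Type*} (G : SimpleGraph V) [Fintype V] : ℕ :=
  sInf {m | ∃ x y : V, x ≠ y ∧ (DG G x y).card = m}

/-- `𝔡*(G) = max_{x ≠ y} |𝒟_G(x,y)|`. -/
noncomputable def frakdStar {V : Type*} (G : SimpleGraph V) [Fintype V] : ℕ :=
  sSup {m | ∃ x y : V, x ≠ y ∧ (DG G x y).card = m}

/-- A partition of the vertex set is a `k`-partition generator if every pair of
distinct vertices is distinguished by at least `k` parts. -/
noncomputable def IsKPartitionGenerator {V : Type*} (G : SimpleGraph V) [Fintype V]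
    [DecidableEq V] (k : ℕ) (P : Finpartition (Finset.univ : Finset V)) : Prop :=
  ∀ u v : V, u ≠ v → k ≤ (P.parts.filter fun S => setDist G u S ≠ setDist G v S).card

/-- The `k`-partition dimension `pd_k(G)`. -/
noncomputable def pd {V : Type*} (G : SimpleGraph V) [Fintype V] [DecidableEq V] (k : ℕ) : ℕ :=
  sInf {m | ∃ P : Finpartition (Finset.univ : Finset V),
    IsKPartitionGenerator G k P ∧ P.parts.card = m}

/-- A set of vertices is a `k`-metric generator if every pair of distinct
vertices is distinguished by at least `k` of its vertices. -/
def IsKMetricGenerator {V : Type*} (G : SimpleGraph V) [Fintype V] (k : ℕ) (W : Finset V) : Prop :=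
  ∀ u v : V, u ≠ v → k ≤ (W.filter fun z => G.dist z u ≠ G.dist z v).card

/-- The `k`-metric dimension `dim_k(G)`. -/
noncomputable def metricDim {V : Type*} (G : SimpleGraph V) [Fintype V] (k : ℕ) : ℕ :=
  sInf {m | ∃ W : Finset V, IsKMetricGenerator G k W ∧ W.card = m}


lemma pg_exists_walk {n : ℕ} : ∀ (d : ℕ) (u v : Fin n), Nat.dist u.val v.val = d →
    ∃ w : (SimpleGraph.pathGraph n).Walk u v, w.length = d := by
  intro d
  induction d with
  | zero =>
    intro u v h
    have : u = v := Fin.ext (Nat.eq_of_dist_eq_zero h)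
    subst this
    exact ⟨.nil, rfl⟩
  | succ d ih =>
    intro u v h
    rcases lt_trichotomy u.val v.val with hlt | heq | hgt
    · have hb : u.val + 1 < n := lt_of_le_of_lt hlt v.isLt
      let u' : Fin n := ⟨u.val + 1, hb⟩
      have hadj : (SimpleGraph.pathGraph n).Adj u u' := pathGraph_adj.mpr (Or.inl rfl)
      have hd : Nat.dist u'.val v.val = d := by
        simp only [Nat.dist, u'] at h ⊢; omega
      obtain ⟨w, hw⟩ := ih u' v hd
      exact ⟨.cons hadj w, by simp [hw]⟩
    · exfalso; rw [heq] at h; rw [Nat.dist_self] at h; omega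
    · have h1 : 1 ≤ u.val := by omega
      let u' : Fin n := ⟨u.val - 1, by omega⟩
      have hadj : (SimpleGraph.pathGraph n).Adj u u' := pathGraph_adj.mpr (Or.inr (by simp [u']; omega))
      have hd : Nat.dist u'.val v.val = d := by
        simp only [Nat.dist, u'] at h ⊢; omega
      obtain ⟨w, hw⟩ := ih u' v hd
      exact ⟨.cons hadj w, by simp [hw]⟩

lemma pg_dist_le {n : ℕ} {u v : Fin n} (w : (SimpleGraph.pathGraph n).Walk u v) :
    Nat.dist u.val v.val ≤ w.length := by
  induction w with
  | nil => simp [Nat.dist_self]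
  | @cons a b c h p ih =>
    have hab := pathGraph_adj.mp h
    simp only [SimpleGraph.Walk.length_cons]
    simp only [Nat.dist] at ih ⊢
    omega

lemma pathGraph_dist {n : ℕ} (u v : Fin n) :
    (SimpleGraph.pathGraph n).dist u v = Nat.dist u.val v.val := by
  obtain ⟨w, hw⟩ := pg_exists_walk _ u v rfl
  refine le_antisymm (hw ▸ SimpleGraph.dist_le w) ?_
  have hr : (SimpleGraph.pathGraph n).Reachable u v := ⟨w⟩
  obtain ⟨p, hp⟩ := hr.exists_walk_length_eq_dist
  rw [← hp]; exact pg_dist_le p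

lemma setDist_singleton {V : Type*} (G : SimpleGraph V) (u w : V) :
    setDist G u {w} = G.dist u w := by
  simp [setDist]

lemma setDist_eq_zero_of_mem {V : Type*} (G : SimpleGraph V) {u : V} {S : Finset V}
    (h : u ∈ S) : setDist G u S = 0 := by
  apply Nat.sInf_eq_zero.mpr
  exact Or.inl ⟨u, by simpa using h, SimpleGraph.dist_self⟩

section parts
variable (n k : ℕ)

/-- part i of our partition -/
def pgPart (i : ℕ) : Finset (Fin n) := univ.filter (fun x => min x.val k = i)

lemma mem_pgPart {i : ℕ} {x : Fin n} : x ∈ pgPart n k i ↔ min x.val k = i := by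
  simp [pgPart]

lemma pgPart_eq_singleton {i : ℕ} (hi : i < k) (hin : i < n) :
    pgPart n k i = {(⟨i, hin⟩ : Fin n)} := by
  ext x
  simp only [mem_pgPart, Finset.mem_singleton, Fin.ext_iff]
  omega

lemma setDist_pgPart_lt {i : ℕ} (hi : i < k) (hin : i < n) (u : Fin n) :
    setDist (SimpleGraph.pathGraph n) u (pgPart n k i) = Nat.dist u.val i := by
  rw [pgPart_eq_singleton n k hi hin, setDist_singleton, pathGraph_dist]

lemma setDist_pgPart_top (hkn : k < n) (u : Fin n) :
    setDist (SimpleGraph.pathGraph n) u (pgPart n k k) = k - u.val := by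
  have hne : ∃ m, m ∈ (SimpleGraph.pathGraph n).dist u '' ((pgPart n k k : Finset (Fin n)) : Set (Fin n)) ∧ m = k - u.val := by
    by_cases h : k ≤ u.val
    · exact ⟨0, ⟨u, by simp [mem_pgPart]; omega, SimpleGraph.dist_self⟩, by omega⟩
    · refine ⟨k - u.val, ⟨⟨k, hkn⟩, by simp [mem_pgPart], ?_⟩, rfl⟩
      rw [pathGraph_dist]; simp [Nat.dist]; omega
  obtain ⟨m, hm, hmeq⟩ := hne
  subst hmeq
  refine le_antisymm (Nat.sInf_le hm) ?_
  apply le_csInf ⟨_, hm⟩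
  rintro b ⟨w, hw, rfl⟩
  simp only [Finset.coe_filter, Set.mem_setOf_eq, pgPart, Finset.mem_coe, Finset.mem_filter] at hw
  rw [pathGraph_dist]
  simp [Nat.dist]; omega

end parts

section partition
variable (n k : ℕ) (hk : 1 ≤ k) (hkn : k < n)

lemma pgPart_nonempty {i : ℕ} (hik : i ≤ k) (hkn : k < n) : (pgPart n k i).Nonempty := by
  exact ⟨⟨i, by omega⟩, by simp [mem_pgPart]; omega⟩

lemma pgPart_injOn (hkn : k < n) : Set.InjOn (pgPart n k) (Finset.range (k+1) : Set ℕ) := by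
  intro i hi j hj hij
  simp only [Finset.coe_range, Set.mem_Iio] at hi hj
  have : (⟨i, by omega⟩ : Fin n) ∈ pgPart n k i := by rw [mem_pgPart]; simp; omega
  rw [hij, mem_pgPart] at this
  simp at this; omega

noncomputable def pgPartition (hkn : k < n) : Finpartition (Finset.univ : Finset (Fin n)) where
  parts := (Finset.range (k+1)).image (pgPart n k)
  supIndep := by
    rw [Finset.supIndep_iff_pairwiseDisjoint]
    rintro a ha b hb hab
    simp only [Finset.coe_image, Set.mem_image, Finset.mem_coe, Finset.mem_range] at ha hb
    obtain ⟨i, hi, rfl⟩ := ha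
    obtain ⟨j, hj, rfl⟩ := hb
    have hij : i ≠ j := fun h => hab (by rw [h])
    simp only [Function.onFun, id]
    rw [Finset.disjoint_left]
    intro x hx hx'
    rw [mem_pgPart] at hx hx'
    omega
  sup_parts := by
    apply Finset.Subset.antisymm
    · intro x _; simp
    · intro x _
      rw [Finset.mem_sup]
      refine ⟨pgPart n k (min x.val k), Finset.mem_image_of_mem _ (by simp [Nat.lt_succ_iff]), ?_⟩
      simp only [id]
      rw [mem_pgPart]
  bot_notMem := by
    simp only [Finset.bot_eq_empty, Finset.mem_image, not_exists]
    rintro i ⟨hi, h⟩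
    simp only [Finset.mem_range] at hi
    exact (pgPart_nonempty n k (by omega) hkn).ne_empty h

lemma pgPartition_card (hkn : k < n) : (pgPartition n k hkn).parts.card = k + 1 := by
  rw [pgPartition]
  rw [Finset.card_image_of_injOn (pgPart_injOn n k hkn), Finset.card_range]

end partition

lemma pg_bad_char {n k : ℕ} (hkn : k < n) {u v : Fin n} (huv : u ≠ v) {i : ℕ} (hik : i ≤ k)
    (h : setDist (SimpleGraph.pathGraph n) u (pgPart n k i)
       = setDist (SimpleGraph.pathGraph n) v (pgPart n k i)) :
    (i < k ∧ u.val + v.val = 2 * i) ∨ (i = k ∧ k ≤ u.val ∧ k ≤ v.val) := by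
  have huv' : u.val ≠ v.val := fun h => huv (Fin.ext h)
  rcases lt_or_eq_of_le hik with hik' | hik2
  · left
    rw [setDist_pgPart_lt n k hik' (by omega) u, setDist_pgPart_lt n k hik' (by omega) v] at h
    simp only [Nat.dist] at h
    omega
  · refine Or.inr ⟨hik2, ?_⟩
    rw [hik2] at h
    rw [setDist_pgPart_top n k hkn u, setDist_pgPart_top n k hkn v] at h
    omega

lemma pgPartition_isGen (n k : ℕ) (hkn : k < n) :
    IsKPartitionGenerator (SimpleGraph.pathGraph n) k (pgPartition n k hkn) := by
  intro u v huv
  have hparts : (pgPartition n k hkn).parts = (Finset.range (k+1)).image (pgPart n k) := rfl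
  rw [hparts]
  set Q : Finset (Fin n) → Prop := fun S =>
    setDist (SimpleGraph.pathGraph n) u S ≠ setDist (SimpleGraph.pathGraph n) v S with hQ
  have himg : ((Finset.range (k+1)).image (pgPart n k)).filter Q
      = ((Finset.range (k+1)).filter (fun i => Q (pgPart n k i))).image (pgPart n k) := by
    rw [Finset.filter_image]
  rw [himg, Finset.card_image_of_injOn
    ((pgPart_injOn n k hkn).mono (by intro x hx; simp only [Finset.coe_filter, Set.mem_setOf_eq, Finset.mem_range] at hx; simp [hx.1]))]
  have hsplit := Finset.card_filter_add_card_filter_not (s := Finset.range (k+1))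
    (p := fun i => Q (pgPart n k i))
  have hbad : ((Finset.range (k+1)).filter (fun i => ¬ Q (pgPart n k i))).card ≤ 1 := by
    apply Finset.card_le_one.mpr
    intro a ha b hb
    simp only [Finset.mem_filter, Finset.mem_range, hQ, not_not] at ha hb
    have h1 := pg_bad_char hkn huv (by omega : a ≤ k) ha.2
    have h2 := pg_bad_char hkn huv (by omega : b ≤ k) hb.2
    have huv' : u.val ≠ v.val := fun h => huv (Fin.ext h)
    omega
  rw [Finset.card_range] at hsplit
  omega

lemma pg_lower (n k : ℕ) (hn : 3 ≤ n) (hk : 1 ≤ k) (hk' : k ≤ n - 1)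
    (P : Finpartition (Finset.univ : Finset (Fin n)))
    (hgen : IsKPartitionGenerator (SimpleGraph.pathGraph n) k P) :
    k + 1 ≤ P.parts.card := by
  by_contra hcon
  push_neg at hcon
  have hcard : P.parts.card ≤ k := by omega
  have hsum : ∑ S ∈ P.parts, S.card = n := by
    rw [P.sum_card_parts]; simp
  have hex : ∃ S ∈ P.parts, 2 ≤ S.card := by
    by_contra h
    push_neg at h
    have : ∑ S ∈ P.parts, S.card ≤ P.parts.card * 1 :=
      Finset.sum_le_card_nsmul _ _ 1 (fun x hx => by have := h x hx; omega)
    omega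
  obtain ⟨S, hS, h2⟩ := hex
  obtain ⟨u, hu, v, hv, hne⟩ := Finset.one_lt_card.mp h2
  have hk := hgen u v hne
  have hsub : (P.parts.filter fun T => setDist (SimpleGraph.pathGraph n) u T
      ≠ setDist (SimpleGraph.pathGraph n) v T) ⊆ P.parts.erase S := by
    intro T hT
    rw [Finset.mem_filter] at hT
    rw [Finset.mem_erase]
    refine ⟨?_, hT.1⟩
    rintro rfl
    exact hT.2 (by rw [setDist_eq_zero_of_mem _ hu, setDist_eq_zero_of_mem _ hv])
  have := Finset.card_le_card hsub
  rw [Finset.card_erase_of_mem hS] at this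
  omega

theorem stmt_19 (n : ℕ) (hn : 3 ≤ n) (k : ℕ) (hk : 1 ≤ k) (hk' : k ≤ n - 1) :
    pd (SimpleGraph.pathGraph n) k = k + 1 := by
  have hkn : k < n := by omega
  unfold pd
  apply le_antisymm
  · exact Nat.sInf_le ⟨pgPartition n k hkn, pgPartition_isGen n k hkn, pgPartition_card n k hkn⟩
  · apply le_csInf
    · exact ⟨k + 1, pgPartition n k hkn, pgPartition_isGen n k hkn, pgPartition_card n k hkn⟩
    rintro m ⟨P, hgen, rfl⟩
    exact pg_lower n k hn hk hk' P hgen
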